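/- Let A = (a_{jk}) be a real symmetric positive definite 3×3 matrix with a := (a₁₃, a₂₃) and a₀(ξ) := ∑_{j,k=1}^{2} a_{jk} ξ_j ξ_k, let P = (p_{jk}) be a real symmetric positive definite 2×2 matrix with p₀(ξ) := ∑_{j,k=1}^{2} p_{jk} ξ_j ξ_k, and let b > 0. For ξ ∈ ℝ² and τ > 0 define λ̃(ξ, τ) := i⟨a, ξ⟩/a₃₃ + (1/a₃₃)·√(a₃₃·(τ² + a₀(ξ)) − ⟨a, ξ⟩²) and g̃(ξ, τ) := b·λ̃(ξ, τ)·(τ² + p₀(ξ))/(τ² + a₀(ξ)). Then there exist constants a*, b*, c*, d* > 0 such that for all ξ ∈ ℝ² and τ > 0: Re λ̃(ξ, τ) ≥ a*·√(|ξ|² + τ²), τ² + a₀(ξ) ≤ b*·(|ξ|² + τ²), τ² + p₀(ξ) ≥ c*·(|ξ|² + τ²), and Re g̃(ξ, τ) ≥ d*·√(|ξ|² + τ²). -/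

import Mathlib

/-- The tangential quadratic form `a₀(ξ) = ∑_{j,k=1}^{2} a_{jk} ξ_j ξ_k`. -/
def quadForm2of3 (A : Matrix (Fin 3) (Fin 3) ℝ) (ξ : Fin 2 → ℝ) : ℝ :=
  ∑ j : Fin 2, ∑ k : Fin 2, A j.castSucc k.castSucc * ξ j * ξ k

/-- The quadratic form `p₀(ξ) = ∑_{j,k=1}^{2} p_{jk} ξ_j ξ_k`. -/
def quadForm2 (P : Matrix (Fin 2) (Fin 2) ℝ) (ξ : Fin 2 → ℝ) : ℝ :=
  ∑ j : Fin 2, ∑ k : Fin 2, P j k * ξ j * ξ k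

/-- The vector pairing `⟨a, ξ⟩` with `a = (a₁₃, a₂₃)`. -/
def pairA (A : Matrix (Fin 3) (Fin 3) ℝ) (ξ : Fin 2 → ℝ) : ℝ :=
  A 0 2 * ξ 0 + A 1 2 * ξ 1

/-- `λ̃(ξ,τ) = i⟨a,ξ⟩/a₃₃ + (1/a₃₃)√(a₃₃(τ² + a₀(ξ)) - ⟨a,ξ⟩²)`. -/
noncomputable def lamTilde (A : Matrix (Fin 3) (Fin 3) ℝ) (ξ : Fin 2 → ℝ) (τ : ℝ) : ℂ :=
  Complex.I * ((pairA A ξ : ℝ) : ℂ) / ((A 2 2 : ℝ) : ℂ)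
    + (1 / ((A 2 2 : ℝ) : ℂ))
      * ((Real.sqrt (A 2 2 * (τ ^ 2 + quadForm2of3 A ξ) - pairA A ξ ^ 2) : ℝ) : ℂ)

/-- `g̃(ξ,τ) = b·λ̃(ξ,τ)·(τ² + p₀(ξ))/(τ² + a₀(ξ))`. -/
noncomputable def gTilde (A : Matrix (Fin 3) (Fin 3) ℝ) (P : Matrix (Fin 2) (Fin 2) ℝ)
    (b : ℝ) (ξ : Fin 2 → ℝ) (τ : ℝ) : ℂ :=
  ((b : ℝ) : ℂ) * lamTilde A ξ τ
    * (((τ ^ 2 + quadForm2 P ξ) / (τ ^ 2 + quadForm2of3 A ξ) : ℝ) : ℂ)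

/-!
The tangential symbol is controlled by the Schur complement of `a₃₃` in `A`: completing the square
in the normal variable gives `a₃₃ a₀(ξ) - ⟨a, ξ⟩² = a₃₃ · (ξ, t)ᵀ A (ξ, t)` at `t = -⟨a, ξ⟩/a₃₃`,
so positive definiteness of `A` makes the radicand of `λ̃` a positive definite form in `(ξ, τ)`,
whence `Re λ̃ ≳ √(|ξ|² + τ²)`. The factor `(τ² + p₀)/(τ² + a₀)` of `g̃` is real and bounded below
by a positive constant, so the same bound holds for `Re g̃`.
-/

open Matrix

theorem quadForm2_eq_dotProduct_mulVec (M : Matrix (Fin 2) (Fin 2) ℝ) (ξ : Fin 2 → ℝ) :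
    quadForm2 M ξ = ξ ⬝ᵥ M *ᵥ ξ := by
  simp only [quadForm2, dotProduct, mulVec, Fin.sum_univ_two]
  ring

theorem quadForm2of3_eq_quadForm2_submatrix (A : Matrix (Fin 3) (Fin 3) ℝ) (ξ : Fin 2 → ℝ) :
    quadForm2of3 A ξ = quadForm2 (A.submatrix Fin.castSucc Fin.castSucc) ξ :=
  rfl

/-- With `a = M₀₀`, `c = (M₀₁ + M₁₀)/2`, `d = M₁₁`, positivity at `(1,0)`, `(0,1)`, `(c,-a)` gives
`a, d, ad - c² > 0`, and `(ad - c²)/(a + d)` is a lower bound for the smaller eigenvalue. -/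
theorem exists_pos_mul_le_quadForm2 (M : Matrix (Fin 2) (Fin 2) ℝ)
    (hM : ∀ ξ : Fin 2 → ℝ, ξ ≠ 0 → 0 < quadForm2 M ξ) :
    ∃ m : ℝ, 0 < m ∧ ∀ ξ : Fin 2 → ℝ, m * (ξ 0 ^ 2 + ξ 1 ^ 2) ≤ quadForm2 M ξ := by
  set a := M 0 0
  set c := (M 0 1 + M 1 0) / 2
  set d := M 1 1
  have hq (ξ : Fin 2 → ℝ) : quadForm2 M ξ = a * ξ 0 ^ 2 + 2 * c * ξ 0 * ξ 1 + d * ξ 1 ^ 2 := by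
    simp only [quadForm2, Fin.sum_univ_two, a, c, d]
    ring
  have hpos (x y : ℝ) (hxy : x ≠ 0 ∨ y ≠ 0) : 0 < a * x ^ 2 + 2 * c * x * y + d * y ^ 2 := by
    have hv : ![x, y] ≠ 0 := by
      rcases hxy with h | h
      exacts [fun h0 => h (by simpa using congrFun h0 0), fun h0 => h (by simpa using congrFun h0 1)]
    simpa [hq] using hM ![x, y] hv
  have ha : 0 < a := by simpa using hpos 1 0 (by simp)
  have hd : 0 < d := by simpa using hpos 0 1 (by simp)
  have hdet : 0 < a * d - c ^ 2 := by nlinarith [hpos c (-a) (Or.inr (neg_ne_zero.2 ha.ne'))]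
  refine ⟨(a * d - c ^ 2) / (a + d), by positivity, fun ξ => ?_⟩
  rw [hq, div_mul_eq_mul_div, div_le_iff₀ (by positivity)]
  nlinarith [sq_nonneg (a * ξ 0 + c * ξ 1), sq_nonneg (c * ξ 0 + d * ξ 1)]

theorem quadForm2_le_sum_abs_mul (M : Matrix (Fin 2) (Fin 2) ℝ) (ξ : Fin 2 → ℝ) :
    quadForm2 M ξ ≤ (∑ j, ∑ k, |M j k|) * (ξ 0 ^ 2 + ξ 1 ^ 2) := by
  have hsq (j : Fin 2) : ξ j ^ 2 ≤ ξ 0 ^ 2 + ξ 1 ^ 2 := by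
    fin_cases j <;> simp [sq_nonneg]
  simp only [quadForm2, Finset.sum_mul]
  refine Finset.sum_le_sum fun j _ => Finset.sum_le_sum fun k _ => ?_
  calc M j k * ξ j * ξ k ≤ |M j k * ξ j * ξ k| := le_abs_self _
    _ = |M j k| * (|ξ j| * |ξ k|) := by rw [abs_mul, abs_mul, mul_assoc]
    _ ≤ |M j k| * (ξ 0 ^ 2 + ξ 1 ^ 2) := by
      gcongr
      nlinarith [hsq j, hsq k, sq_abs (ξ j), sq_abs (ξ k), sq_nonneg (|ξ j| - |ξ k|)]

/-- `a₃₃` times the Schur complement of `a₃₃` in `A`. -/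
def scaledSchurComplement (A : Matrix (Fin 3) (Fin 3) ℝ) : Matrix (Fin 2) (Fin 2) ℝ :=
  fun j k => A 2 2 * A j.castSucc k.castSucc - A j.castSucc 2 * A k.castSucc 2

theorem quadForm2_scaledSchurComplement (A : Matrix (Fin 3) (Fin 3) ℝ) (ξ : Fin 2 → ℝ) :
    quadForm2 (scaledSchurComplement A) ξ = A 2 2 * quadForm2of3 A ξ - pairA A ξ ^ 2 := by
  simp only [quadForm2, quadForm2of3, scaledSchurComplement, pairA, Fin.sum_univ_two,
    Fin.castSucc_zero, Fin.castSucc_one]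
  ring

theorem lamTilde_re (A : Matrix (Fin 3) (Fin 3) ℝ) (ξ : Fin 2 → ℝ) (τ : ℝ) :
    (lamTilde A ξ τ).re = √(A 2 2 * (τ ^ 2 + quadForm2of3 A ξ) - pairA A ξ ^ 2) / A 2 2 := by
  rw [lamTilde, mul_div_assoc, ← Complex.ofReal_div, one_div_mul_eq_div, ← Complex.ofReal_div,
    Complex.add_re, Complex.I_mul_re, Complex.ofReal_im, Complex.ofReal_re, neg_zero, zero_add]

theorem gTilde_re (A : Matrix (Fin 3) (Fin 3) ℝ) (P : Matrix (Fin 2) (Fin 2) ℝ) (b : ℝ)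
    (ξ : Fin 2 → ℝ) (τ : ℝ) :
    (gTilde A P b ξ τ).re =
      b * ((τ ^ 2 + quadForm2 P ξ) / (τ ^ 2 + quadForm2of3 A ξ)) * (lamTilde A ξ τ).re := by
  simp only [gTilde, Complex.mul_re, Complex.ofReal_re, Complex.ofReal_im]
  ring

theorem exists_pos_sq_add_quadForm2of3_le (A : Matrix (Fin 3) (Fin 3) ℝ) :
    ∃ B : ℝ, 0 < B ∧ ∀ (ξ : Fin 2 → ℝ) (τ : ℝ),
      τ ^ 2 + quadForm2of3 A ξ ≤ B * (ξ 0 ^ 2 + ξ 1 ^ 2 + τ ^ 2) := by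
  set A' := A.submatrix Fin.castSucc Fin.castSucc
  refine ⟨1 + ∑ j, ∑ k, |A' j k|, by positivity, fun ξ τ => ?_⟩
  have hK : 0 ≤ ∑ j, ∑ k, |A' j k| := by positivity
  have hA' := quadForm2_le_sum_abs_mul A' ξ
  rw [← quadForm2of3_eq_quadForm2_submatrix] at hA'
  nlinarith [sq_nonneg (ξ 0), sq_nonneg (ξ 1), sq_nonneg τ]

namespace Matrix.PosDef

variable {A : Matrix (Fin 3) (Fin 3) ℝ}

/-- Evaluate the form of `A` at `(ξ, -⟨a, ξ⟩/a₃₃)`, the point minimising it on the line over `ξ`. -/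
theorem quadForm2_scaledSchurComplement_pos (hA : A.PosDef) {ξ : Fin 2 → ℝ} (hξ : ξ ≠ 0) :
    0 < quadForm2 (scaledSchurComplement A) ξ := by
  have ha : 0 < A 2 2 := hA.diag_pos
  set v : Fin 3 → ℝ := ![ξ 0, ξ 1, -pairA A ξ / A 2 2]
  have hv : v ≠ 0 := fun h0 => hξ <| funext fun j => by
    fin_cases j
    exacts [congrFun h0 0, congrFun h0 1]
  have hsymm (i j : Fin 3) : A j i = A i j := by simpa using hA.isHermitian.apply i j
  have hform : quadForm2 (scaledSchurComplement A) ξ = A 2 2 * (v ⬝ᵥ A *ᵥ v) := by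
    rw [quadForm2_scaledSchurComplement]
    simp only [v, quadForm2of3, pairA, dotProduct, mulVec, Fin.sum_univ_two, Fin.sum_univ_three,
      Fin.castSucc_zero, Fin.castSucc_one, cons_val_zero, cons_val_one, cons_val,
      hsymm 0 1, hsymm 0 2, hsymm 1 2]
    field_simp
    ring
  rw [hform]
  exact mul_pos ha (by simpa using hA.dotProduct_mulVec_pos hv)

theorem quadForm2of3_nonneg (hA : A.PosDef) (ξ : Fin 2 → ℝ) : 0 ≤ quadForm2of3 A ξ := by
  have h := (hA.posSemidef.submatrix Fin.castSucc).dotProduct_mulVec_nonneg ξ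
  rwa [star_trivial, ← quadForm2_eq_dotProduct_mulVec, ← quadForm2of3_eq_quadForm2_submatrix] at h

theorem exists_pos_mul_sqrt_le_re_lamTilde (hA : A.PosDef) :
    ∃ α : ℝ, 0 < α ∧ ∀ (ξ : Fin 2 → ℝ) (τ : ℝ),
      α * √(ξ 0 ^ 2 + ξ 1 ^ 2 + τ ^ 2) ≤ (lamTilde A ξ τ).re := by
  obtain ⟨m, hm, hS⟩ :=
    exists_pos_mul_le_quadForm2 _ fun _ => hA.quadForm2_scaledSchurComplement_pos
  have ha : 0 < A 2 2 := hA.diag_pos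
  set k := min m (A 2 2)
  refine ⟨√k / A 2 2, by positivity, fun ξ τ => ?_⟩
  have hradicand :
      k * (ξ 0 ^ 2 + ξ 1 ^ 2 + τ ^ 2) ≤ A 2 2 * (τ ^ 2 + quadForm2of3 A ξ) - pairA A ξ ^ 2 := by
    have hSξ := hS ξ
    rw [quadForm2_scaledSchurComplement] at hSξ
    nlinarith [min_le_left m (A 2 2), min_le_right m (A 2 2),
      sq_nonneg (ξ 0), sq_nonneg (ξ 1), sq_nonneg τ]
  rw [lamTilde_re, div_mul_eq_mul_div, ← Real.sqrt_mul (by positivity)]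
  gcongr

theorem exists_pos_mul_le_sq_add_quadForm2 {P : Matrix (Fin 2) (Fin 2) ℝ} (hP : P.PosDef) :
    ∃ c : ℝ, 0 < c ∧ ∀ (ξ : Fin 2 → ℝ) (τ : ℝ),
      c * (ξ 0 ^ 2 + ξ 1 ^ 2 + τ ^ 2) ≤ τ ^ 2 + quadForm2 P ξ := by
  obtain ⟨m, hm, hPξ⟩ := exists_pos_mul_le_quadForm2 P fun ξ hξ => by
    simpa [quadForm2_eq_dotProduct_mulVec] using hP.dotProduct_mulVec_pos hξ
  refine ⟨min m 1, by positivity, fun ξ τ => ?_⟩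
  nlinarith [hPξ ξ, min_le_left m 1, min_le_right m 1,
    sq_nonneg (ξ 0), sq_nonneg (ξ 1), sq_nonneg τ]

end Matrix.PosDef

theorem stmt18 (A : Matrix (Fin 3) (Fin 3) ℝ) (P : Matrix (Fin 2) (Fin 2) ℝ) (b : ℝ)
    (hA : A.PosDef) (hP : P.PosDef) (hb : 0 < b) :
    ∃ as bs cs ds : ℝ, 0 < as ∧ 0 < bs ∧ 0 < cs ∧ 0 < ds ∧
      ∀ (ξ : Fin 2 → ℝ) (τ : ℝ), 0 < τ →
        (lamTilde A ξ τ).re ≥ as * Real.sqrt (ξ 0 ^ 2 + ξ 1 ^ 2 + τ ^ 2) ∧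
        τ ^ 2 + quadForm2of3 A ξ ≤ bs * (ξ 0 ^ 2 + ξ 1 ^ 2 + τ ^ 2) ∧
        τ ^ 2 + quadForm2 P ξ ≥ cs * (ξ 0 ^ 2 + ξ 1 ^ 2 + τ ^ 2) ∧
        (gTilde A P b ξ τ).re ≥ ds * Real.sqrt (ξ 0 ^ 2 + ξ 1 ^ 2 + τ ^ 2) := by
  obtain ⟨α, hα, hlam⟩ := hA.exists_pos_mul_sqrt_le_re_lamTilde
  obtain ⟨B, hB, hupper⟩ := exists_pos_sq_add_quadForm2of3_le A
  obtain ⟨c, hc, hlower⟩ := hP.exists_pos_mul_le_sq_add_quadForm2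
  refine ⟨α, B, c, b * (c / B) * α, hα, hB, hc, by positivity,
    fun ξ τ hτ => ⟨hlam ξ τ, hupper ξ τ, hlower ξ τ, ?_⟩⟩
  set N := ξ 0 ^ 2 + ξ 1 ^ 2 + τ ^ 2
  have hN : 0 < N := by positivity
  have hden : 0 < τ ^ 2 + quadForm2of3 A ξ := by
    have := hA.quadForm2of3_nonneg ξ
    positivity
  have hratio : c / B ≤ (τ ^ 2 + quadForm2 P ξ) / (τ ^ 2 + quadForm2of3 A ξ) := by
    rw [← mul_div_mul_right c B hN.ne']
    exact div_le_div₀ ((by positivity : 0 ≤ c * N).trans (hlower ξ τ)) (hlower ξ τ) hden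
      (hupper ξ τ)
  rw [ge_iff_le, gTilde_re]
  calc b * (c / B) * α * √N = b * (c / B) * (α * √N) := by ring
    _ ≤ b * ((τ ^ 2 + quadForm2 P ξ) / (τ ^ 2 + quadForm2of3 A ξ)) * (lamTilde A ξ τ).re := by
      gcongr
      · exact mul_nonneg hb.le ((by positivity : 0 ≤ c / B).trans hratio)
      · exact hlam ξ τ
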